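/- arXiv:2106.01423 — 3 statements merged into one kernel-verified Lean document; each statement's English description precedes it below -/
import Mathlib

section
/- Let γ_1, …, γ_k, γ_oos ∈ ℝ^d be pairwise distinct, let i ∈ {1,…,k}, and let x ∈ ℝ^d be an i-viable point for the generic-point problem. Then there exists a unique point z on the closed line segment from x to γ_oos satisfying ‖z − γ_i‖ = ‖z − γ_oos‖, and this z moreover satisfies ‖z − γ_oos‖ < ‖z − γ_j‖ for all j ∈ {1,…,k} with j ≠ i. -/
open RealInnerProductSpace

/-- Square-difference identity for distances to two points. -/
lemma sq_diff_inner {d : ℕ} (a b z : EuclideanSpace ℝ (Fin d)) :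
    ‖z - a‖ ^ 2 - ‖z - b‖ ^ 2 = 2 * (⟪z, b - a⟫ - (‖b‖ ^ 2 - ‖a‖ ^ 2) / 2) := by
  have h1 := @norm_sub_sq_real (EuclideanSpace ℝ (Fin d)) _ _ z a
  have h2 := @norm_sub_sq_real (EuclideanSpace ℝ (Fin d)) _ _ z b
  rw [inner_sub_right]
  linarith

/-- Let `γ_1, …, γ_k, γ_oos` be pairwise distinct and `x` be `i`-viable for the
generic-point problem. Then there is a unique point `z` on the closed segment from `x`
to `γ_oos` with `‖z - γᵢ‖ = ‖z - γ_oos‖`, and this `z` satisfies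
`‖z - γ_oos‖ < ‖z - γⱼ‖` for all `j ≠ i`. -/
theorem exists_unique_midpoint_on_segment {d k : ℕ}
    (γ : Fin k → EuclideanSpace ℝ (Fin d)) (γoos : EuclideanSpace ℝ (Fin d))
    (hγ : Function.Injective γ) (hoos : ∀ j : Fin k, γ j ≠ γoos)
    (i : Fin k) (x : EuclideanSpace ℝ (Fin d))
    (hxi : ‖x - γ i‖ < ‖x - γoos‖)
    (hxj : ∀ j : Fin k, j ≠ i → ‖x - γoos‖ < ‖x - γ j‖) :
    ∃ z ∈ segment ℝ x γoos,
      ‖z - γ i‖ = ‖z - γoos‖ ∧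
      (∀ j : Fin k, j ≠ i → ‖z - γoos‖ < ‖z - γ j‖) ∧
      ∀ z' ∈ segment ℝ x γoos, ‖z' - γ i‖ = ‖z' - γoos‖ → z' = z := by
  set u : EuclideanSpace ℝ (Fin d) := γoos - γ i with hu
  set c : ℝ := (‖γoos‖ ^ 2 - ‖γ i‖ ^ 2) / 2 with hc
  -- key equivalence: equidistance ↔ affine condition
  have key : ∀ z : EuclideanSpace ℝ (Fin d),
      ‖z - γ i‖ = ‖z - γoos‖ ↔ ⟪z, u⟫ = c := by
    intro z
    have h := sq_diff_inner (γ i) γoos z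
    constructor
    · intro hz
      rw [hz] at h
      linarith
    · intro hz
      rw [hz] at h
      have hsq : ‖z - γ i‖ ^ 2 = ‖z - γoos‖ ^ 2 := by linarith
      have := congrArg Real.sqrt hsq
      rwa [Real.sqrt_sq (norm_nonneg _), Real.sqrt_sq (norm_nonneg _)] at this
  -- strict inequality at x
  have hx0 : ⟪x, u⟫ < c := by
    have h := sq_diff_inner (γ i) γoos x
    have hsq : ‖x - γ i‖ ^ 2 < ‖x - γoos‖ ^ 2 :=
      pow_lt_pow_left₀ hxi (norm_nonneg _) two_ne_zero
    linarith
  -- at γoos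
  have h1 : c < ⟪γoos, u⟫ := by
    have h := sq_diff_inner (γ i) γoos γoos
    have hpos : 0 < ‖γoos - γ i‖ ^ 2 := by
      have : γoos - γ i ≠ 0 := sub_ne_zero.mpr (Ne.symm (hoos i))
      exact pow_pos (norm_pos_iff.mpr this) 2
    simp only [sub_self, norm_zero] at h
    nlinarith
  set b : ℝ := ⟪γoos, u⟫ - ⟪x, u⟫ with hb
  have hbpos : 0 < b := by linarith
  set t : ℝ := (c - ⟪x, u⟫) / b with ht
  have ht0 : 0 < t := div_pos (by linarith) hbpos
  have ht1 : t < 1 := (div_lt_one hbpos).mpr (by linarith)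
  set z : EuclideanSpace ℝ (Fin d) := x + t • (γoos - x) with hz
  have hzinner : ⟪z, u⟫ = c := by
    rw [hz, inner_add_left, real_inner_smul_left, inner_sub_left]
    have htb : t * b = c - ⟪x, u⟫ := div_mul_cancel₀ _ (ne_of_gt hbpos)
    rw [hb] at htb
    linarith
  have hmem : z ∈ segment ℝ x γoos := by
    rw [segment_eq_image']
    exact ⟨t, ⟨le_of_lt ht0, le_of_lt ht1⟩, rfl⟩
  have hzoos : ‖z - γoos‖ = (1 - t) * ‖x - γoos‖ := by
    have : z - γoos = (1 - t) • (x - γoos) := by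
      rw [hz]; module
    rw [this, norm_smul, Real.norm_eq_abs, abs_of_pos (by linarith)]
  have hxz : ‖x - z‖ = t * ‖x - γoos‖ := by
    have : x - z = t • (x - γoos) := by
      rw [hz]; module
    rw [this, norm_smul, Real.norm_eq_abs, abs_of_pos ht0]
  refine ⟨z, hmem, (key z).mpr hzinner, ?_, ?_⟩
  · intro j hj
    have htri : ‖x - γ j‖ ≤ ‖x - z‖ + ‖z - γ j‖ := by
      have := norm_add_le (x - z) (z - γ j)
      rwa [sub_add_sub_cancel] at this
    have := hxj j hj
    nlinarith [norm_nonneg (x - γoos)]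
  · intro z' hz' heq
    rw [segment_eq_image'] at hz'
    obtain ⟨s, ⟨hs0, hs1⟩, rfl⟩ := hz'
    have hinner' := (key _).mp heq
    simp only [inner_add_left, real_inner_smul_left, inner_sub_left] at hinner'
    have hsb : s * b = c - ⟪x, u⟫ := by rw [hb]; linarith
    have hst : s = t := by
      rw [ht, ← hsb, mul_div_cancel_right₀ _ (ne_of_gt hbpos)]
    rw [hst]
end

section
/- Let γ_1, …, γ_k, γ_oos ∈ ℝ^d be pairwise distinct, let i ∈ {1,…,k}, let x ∈ ℝ^d be an i-viable point for the generic-point problem, and let z be a point on the closed line segment from x to γ_oos with ‖z − γ_i‖ = ‖z − γ_oos‖. Then every point w on the closed line segment from x to z with w ≠ z satisfies ‖w − γ_i‖ < ‖w − γ_oos‖ and ‖w − γ_oos‖ < ‖w − γ_j‖ for all j ∈ {1,…,k} with j ≠ i (in particular every such w is i-viable), and z itself satisfies ‖z − γ_oos‖ < ‖z − γ_j‖ for all j ∈ {1,…,k} with j ≠ i. -/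
/-- On the segment from `x` to `y`, if `‖x - y‖ < ‖x - q‖`, then every point `p` of the
segment satisfies `‖p - y‖ < ‖p - q‖`. -/
lemma seg_closer_aux {E : Type*} [NormedAddCommGroup E] [NormedSpace ℝ E]
    (x y q : E) (h : ‖x - y‖ < ‖x - q‖) :
    ∀ p ∈ segment ℝ x y, ‖p - y‖ < ‖p - q‖ := by
  rintro p ⟨a, b, ha, hb, hab, rfl⟩
  have hb' : b = 1 - a := by linarith
  subst hb'
  have h1 : a • x + (1 - a) • y - y = a • (x - y) := by module
  have h2 : a • x + (1 - a) • y - x = (1 - a) • (y - x) := by module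
  have hpy : ‖a • x + (1 - a) • y - y‖ = a * ‖x - y‖ := by
    rw [h1, norm_smul, Real.norm_eq_abs, abs_of_nonneg ha]
  have hpx : ‖a • x + (1 - a) • y - x‖ = (1 - a) * ‖x - y‖ := by
    rw [h2, norm_smul, Real.norm_eq_abs, abs_of_nonneg (by linarith), norm_sub_rev]
  have htri : ‖x - q‖ ≤ ‖a • x + (1 - a) • y - x‖ + ‖a • x + (1 - a) • y - q‖ := by
    rw [norm_sub_rev (a • x + (1 - a) • y) x]
    exact norm_sub_le_norm_sub_add_norm_sub x (a • x + (1 - a) • y) q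
  linarith [norm_nonneg (x - y)]

/-- Let `γ_1, …, γ_k, γ_oos` be pairwise distinct, let `x` be `i`-viable for the
generic-point problem, and let `z` be a point of the closed segment from `x` to `γ_oos`
equidistant from `γᵢ` and `γ_oos`. Then every `w ≠ z` on the closed segment from `x` to
`z` satisfies `‖w - γᵢ‖ < ‖w - γ_oos‖ < ‖w - γⱼ‖` for all `j ≠ i` (so `w` is
`i`-viable), and `z` satisfies `‖z - γ_oos‖ < ‖z - γⱼ‖` for all `j ≠ i`. -/
theorem segment_to_midpoint_viable {d k : ℕ}
    (γ : Fin k → EuclideanSpace ℝ (Fin d)) (γoos : EuclideanSpace ℝ (Fin d))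
    (hγ : Function.Injective γ) (hoos : ∀ j : Fin k, γ j ≠ γoos)
    (i : Fin k) (x : EuclideanSpace ℝ (Fin d))
    (hxi : ‖x - γ i‖ < ‖x - γoos‖)
    (hxj : ∀ j : Fin k, j ≠ i → ‖x - γoos‖ < ‖x - γ j‖)
    (z : EuclideanSpace ℝ (Fin d)) (hz : z ∈ segment ℝ x γoos)
    (hzeq : ‖z - γ i‖ = ‖z - γoos‖) :
    (∀ w ∈ segment ℝ x z, w ≠ z →
        ‖w - γ i‖ < ‖w - γoos‖ ∧ ∀ j : Fin k, j ≠ i → ‖w - γoos‖ < ‖w - γ j‖) ∧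
      ∀ j : Fin k, j ≠ i → ‖z - γoos‖ < ‖z - γ j‖ := by
  refine ⟨?_, fun j hj => seg_closer_aux x γoos (γ j) (hxj j hj) z hz⟩
  rintro w hw hne
  have hwseg : w ∈ segment ℝ x γoos :=
    (convex_segment x γoos).segment_subset (left_mem_segment ℝ x γoos) hz hw
  refine ⟨?_, fun j hj => seg_closer_aux x γoos (γ j) (hxj j hj) w hwseg⟩
  obtain ⟨a, b, ha, hb, hab, rfl⟩ := hz
  obtain ⟨c, t, hc, ht, hct, rfl⟩ := hw
  have hb' : b = 1 - a := by linarith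
  subst hb'
  have ht' : t = 1 - c := by linarith
  subst ht'
  set z := a • x + (1 - a) • γoos with hzdef
  have hcpos : 0 < c := by
    rcases hc.lt_or_eq with h | h
    · exact h
    · exfalso
      apply hne
      rw [← h]
      simp
  -- ‖z - γoos‖ = a * ‖x - γoos‖
  have hz1 : z - γoos = a • (x - γoos) := by rw [hzdef]; module
  have hznorm : ‖z - γoos‖ = a * ‖x - γoos‖ := by
    rw [hz1, norm_smul, Real.norm_eq_abs, abs_of_nonneg ha]
  -- ‖w - γoos‖ = (c + (1-c)*a) * ‖x - γoos‖
  have hw1 : c • x + (1 - c) • z - γoos = (c + (1 - c) * a) • (x - γoos) := by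
    rw [hzdef]; module
  have hca : 0 ≤ c + (1 - c) * a := by nlinarith
  have hwnorm : ‖c • x + (1 - c) • z - γoos‖ = (c + (1 - c) * a) * ‖x - γoos‖ := by
    rw [hw1, norm_smul, Real.norm_eq_abs, abs_of_nonneg hca]
  -- convexity bound for ‖w - γ i‖
  have hw2 : c • x + (1 - c) • z - γ i = c • (x - γ i) + (1 - c) • (z - γ i) := by module
  have hwi : ‖c • x + (1 - c) • z - γ i‖ ≤ c * ‖x - γ i‖ + (1 - c) * ‖z - γ i‖ := by
    rw [hw2]
    calc ‖c • (x - γ i) + (1 - c) • (z - γ i)‖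
        ≤ ‖c • (x - γ i)‖ + ‖(1 - c) • (z - γ i)‖ := norm_add_le _ _
      _ = c * ‖x - γ i‖ + (1 - c) * ‖z - γ i‖ := by
          rw [norm_smul, norm_smul, Real.norm_eq_abs, Real.norm_eq_abs,
            abs_of_nonneg hc, abs_of_nonneg (by linarith)]
  rw [hwnorm]
  rw [hzeq, hznorm] at hwi
  nlinarith
end

section
/- Let γ_1, …, γ_k, γ_oos ∈ ℝ^d be pairwise distinct prototypes and generic point, and suppose that for some i ∈ {1,…,k} the set P_i of i-viable points for the generic-point problem is nonempty. Then P_i is adjacent to the OOS-core: there exists a point p ∈ ℝ^d such that for every ε > 0 the open ball B_ε(p) contains at least one point of P_i and at least one point of the OOS-core. -/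
lemma key_bisector_perturb {E : Type*} [NormedAddCommGroup E] [InnerProductSpace ℝ E]
    (a b v : E) (s : ℝ) (hab : ‖a‖ = ‖b‖) (hv : a - b = v) :
    ‖a + s • v‖ ^ 2 - ‖b + s • v‖ ^ 2 = 2 * s * ‖v‖ ^ 2 := by
  have h1 := norm_add_sq_real a (s • v)
  have h2 := norm_add_sq_real b (s • v)
  have h3 : (inner ℝ a (s • v) : ℝ) - inner ℝ b (s • v) = s * ‖v‖ ^ 2 := by
    rw [real_inner_smul_right, real_inner_smul_right, ← mul_sub, ← inner_sub_left, hv,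
      real_inner_self_eq_norm_sq]
  have hab2 : ‖a‖ ^ 2 = ‖b‖ ^ 2 := by rw [hab]
  linarith

/-- If `γ_1, …, γ_k, γ_oos` are pairwise distinct and the set `P_i` of `i`-viable points
for the generic-point problem is nonempty, then `P_i` is adjacent to the OOS-core:
there is a point `p` such that every open ball around `p` contains a point of `P_i`
and a point of the OOS-core. -/
theorem viable_adjacent_to_core {d k : ℕ}
    (γ : Fin k → EuclideanSpace ℝ (Fin d)) (γoos : EuclideanSpace ℝ (Fin d))
    (hγ : Function.Injective γ) (hoos : ∀ j : Fin k, γ j ≠ γoos)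
    (i : Fin k)
    (hP : {x : EuclideanSpace ℝ (Fin d) |
        ‖x - γ i‖ < ‖x - γoos‖ ∧
          ∀ j : Fin k, j ≠ i → ‖x - γoos‖ < ‖x - γ j‖}.Nonempty) :
    ∃ p : EuclideanSpace ℝ (Fin d), ∀ ε > (0 : ℝ),
      (∃ u ∈ Metric.ball p ε,
        ‖u - γ i‖ < ‖u - γoos‖ ∧
          ∀ j : Fin k, j ≠ i → ‖u - γoos‖ < ‖u - γ j‖) ∧
      ∃ v ∈ Metric.ball p ε, ∀ j : Fin k, ‖v - γoos‖ < ‖v - γ j‖ := by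
  obtain ⟨x₀, hx₀i, hx₀j⟩ := hP
  set f : ℝ → EuclideanSpace ℝ (Fin d) := fun t => x₀ + t • (γoos - x₀) with hf
  -- along the segment, all conditions for j ≠ i stay strict
  have hA : ∀ t ∈ Set.Icc (0:ℝ) 1, ∀ j, j ≠ i → ‖f t - γoos‖ < ‖f t - γ j‖ := by
    rintro t ⟨ht0, ht1⟩ j hj
    have h1 : f t - γoos = (1 - t) • (x₀ - γoos) := by simp only [hf]; module
    have h1' : ‖f t - γoos‖ = (1 - t) * ‖x₀ - γoos‖ := by
      rw [h1, norm_smul, Real.norm_eq_abs, abs_of_nonneg (by linarith)]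
    have h2 : f t - x₀ = t • (γoos - x₀) := by simp only [hf]; module
    have h2' : ‖f t - x₀‖ = t * ‖x₀ - γoos‖ := by
      rw [h2, norm_smul, Real.norm_eq_abs, abs_of_nonneg ht0, norm_sub_rev]
    have h3 := dist_triangle x₀ (f t) (γ j)
    rw [dist_eq_norm, dist_eq_norm, dist_eq_norm, norm_sub_rev x₀ (f t), h2'] at h3
    have h4 := hx₀j j hj
    linarith
  -- IVT to find a bisector point
  have hcont : Continuous fun t : ℝ => ‖f t - γ i‖ - ‖f t - γoos‖ := by
    have hfc : Continuous f := continuous_const.add (continuous_id.smul continuous_const)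
    exact ((hfc.sub continuous_const).norm).sub ((hfc.sub continuous_const).norm)
  have hf0 : f 0 = x₀ := by simp [hf]
  have hf1 : f 1 = γoos := by simp [hf]
  have hg0 : ‖f 0 - γ i‖ - ‖f 0 - γoos‖ < 0 := by rw [hf0]; linarith
  have hg1 : 0 < ‖f 1 - γ i‖ - ‖f 1 - γoos‖ := by
    rw [hf1]
    have : γoos - γ i ≠ 0 := sub_ne_zero_of_ne (Ne.symm (hoos i))
    simpa using norm_pos_iff.2 this
  obtain ⟨t, htmem, hgt⟩ :=
    intermediate_value_Icc (zero_le_one) hcont.continuousOn ⟨hg0.le, hg1.le⟩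
  set p := f t with hp
  have hpe : ‖p - γ i‖ = ‖p - γoos‖ := by
    have : ‖f t - γ i‖ - ‖f t - γoos‖ = 0 := hgt
    linarith [this]
  have hcore : ∀ j, j ≠ i → ‖p - γoos‖ < ‖p - γ j‖ := hA t htmem
  refine ⟨p, fun ε hε => ?_⟩
  -- openness of the j ≠ i conditions around p
  have hopen : IsOpen {x : EuclideanSpace ℝ (Fin d) |
      ∀ j, j ≠ i → ‖x - γoos‖ < ‖x - γ j‖} := by
    have : {x : EuclideanSpace ℝ (Fin d) | ∀ j, j ≠ i → ‖x - γoos‖ < ‖x - γ j‖} =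
        ⋂ j, ⋂ (_ : j ≠ i), {x | ‖x - γoos‖ < ‖x - γ j‖} := by
      ext x; simp
    rw [this]
    refine isOpen_iInter_of_finite fun j => isOpen_iInter_of_finite fun _ => ?_
    exact isOpen_lt ((continuous_id.sub continuous_const).norm)
      ((continuous_id.sub continuous_const).norm)
  obtain ⟨δ, hδpos, hδ⟩ := Metric.isOpen_iff.1 hopen p hcore
  set v := γoos - γ i with hv
  have hvne : v ≠ 0 := sub_ne_zero_of_ne (Ne.symm (hoos i))
  have hvpos : 0 < ‖v‖ := norm_pos_iff.2 hvne
  set s : ℝ := min δ ε / (2 * ‖v‖) with hs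
  have hspos : 0 < s := by positivity
  have hsmall : s * ‖v‖ < min δ ε := by
    rw [hs, div_mul_eq_mul_div, mul_comm, mul_div_assoc]
    have : min δ ε / (2 * ‖v‖) * ‖v‖ = min δ ε / 2 := by field_simp
    calc ‖v‖ * (min δ ε / (2 * ‖v‖)) = min δ ε / 2 := by field_simp
      _ < min δ ε := by have := lt_min hδpos hε; linarith [lt_min hδpos hε]
  have hmemball : ∀ c : ℝ, |c| = s → p + c • v ∈ Metric.ball p δ ∧ p + c • v ∈ Metric.ball p ε := by
    intro c hc
    have hd : dist (p + c • v) p = s * ‖v‖ := by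
      rw [dist_eq_norm, add_sub_cancel_left, norm_smul, Real.norm_eq_abs, hc]
    constructor <;> rw [Metric.mem_ball, hd]
    · exact lt_of_lt_of_le hsmall (min_le_left _ _)
    · exact lt_of_lt_of_le hsmall (min_le_right _ _)
  -- key perturbation computation
  have hkey : ∀ c : ℝ, ‖(p + c • v) - γ i‖ ^ 2 - ‖(p + c • v) - γoos‖ ^ 2 = 2 * c * ‖v‖ ^ 2 := by
    intro c
    have h1 : (p + c • v) - γ i = (p - γ i) + c • v := by module
    have h2 : (p + c • v) - γoos = (p - γoos) + c • v := by module
    rw [h1, h2]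
    exact key_bisector_perturb _ _ _ c hpe (by module)
  constructor
  · -- point of P_i : take c = -s
    refine ⟨p + (-s) • v, (hmemball (-s) (by rw [abs_neg, abs_of_pos hspos])).2, ?_, ?_⟩
    · have h := hkey (-s)
      have hsv : 0 < s * ‖v‖ ^ 2 := mul_pos hspos (pow_pos hvpos 2)
      have hlt : ‖(p + (-s) • v) - γ i‖ ^ 2 < ‖(p + (-s) • v) - γoos‖ ^ 2 := by nlinarith
      exact lt_of_pow_lt_pow_left₀ 2 (norm_nonneg _) hlt
    · intro j hj
      exact hδ (hmemball (-s) (by rw [abs_neg, abs_of_pos hspos])).1 j hj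
  · -- point of the core : take c = s
    refine ⟨p + s • v, (hmemball s (abs_of_pos hspos)).2, fun j => ?_⟩
    by_cases hj : j = i
    · subst hj
      have h := hkey s
      have hsv : 0 < s * ‖v‖ ^ 2 := mul_pos hspos (pow_pos hvpos 2)
      have hlt : ‖(p + s • v) - γoos‖ ^ 2 < ‖(p + s • v) - γ j‖ ^ 2 := by nlinarith
      exact lt_of_pow_lt_pow_left₀ 2 (norm_nonneg _) hlt
    · exact hδ (hmemball s (abs_of_pos hspos)).1 j hj
end
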